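/- With the setup of the previous identity (Ric_t(V_x)=0, Ric_t image in H_x, A_t(H_x) ⊆ V_x, A_t(V_x)=0, A_0=0, Q and Q̂ solving dQ_t = −½Ric_t Q_t dt and dQ̂_t = −½(id−A_t)Ric_t(id+A_t)Q̂_t dt with identity initial condition): for any absolutely continuous k : [0,T] → H_x with k_0 = 0, if h_t = Q_t ∫₀^t Q_s^{-1} dk_s, then (id + A_t) Q̂_t ∫₀^t Q̂_s^{-1}(id − A_s) dk_s = h_t + ∫₀^t dA_s h_s. -/

import Mathlib

open ContinuousLinearMap

/-!
Both sides solve the same inhomogeneous linear equation `y' = B y + k'`, `y 0 = 0`, with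
`B = A' - ½ Ric`. For the right-hand side `h + ∫ A' h` this is because `∫ A' h` takes values
in `V`, which is killed by `A'` and `Ric`. For the left-hand side, `P = (id + A) Q̂` solves
`P' = B P` since `A² = A' A = 0`, and has inverse `Q̂⁻¹ (id - A)`; so the left-hand side is the
variation-of-constants formula `P ∫ P⁻¹ k'`, which is the unique solution.
-/

section PointwiseInverse

variable {𝕜 R : Type*} [NontriviallyNormedField 𝕜] [NormedRing R] [NormedAlgebra 𝕜 R]
  [HasSummableGeomSeries R]

theorem HasDerivAt.of_forall_inverse {P Pinv : 𝕜 → R} {P' : R} {t : 𝕜}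
    (hP : HasDerivAt P P' t) (hinv : ∀ s, Pinv s * P s = 1 ∧ P s * Pinv s = 1) :
    HasDerivAt Pinv (-(Pinv t * P' * Pinv t)) t := by
  let u : 𝕜 → Rˣ := fun s => ⟨P s, Pinv s, (hinv s).2, (hinv s).1⟩
  have hPinv : Ring.inverse ∘ P = Pinv := funext fun s => by
    rw [Function.comp_apply, show P s = u s from rfl, Ring.inverse_unit]
    rfl
  have h := (hasFDerivAt_ringInverse (𝕜 := 𝕜) (u t)).comp_hasDerivAt t hP
  rw [hPinv] at h
  refine h.congr_deriv ?_
  simp [u]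

theorem continuous_of_forall_inverse {P Pinv P' : 𝕜 → R} (hP : ∀ t, HasDerivAt P (P' t) t)
    (hinv : ∀ s, Pinv s * P s = 1 ∧ P s * Pinv s = 1) : Continuous Pinv :=
  continuous_iff_continuousAt.mpr fun t => ((hP t).of_forall_inverse hinv).continuousAt

end PointwiseInverse

section Ring

variable {R : Type*} [Ring R] {a : R}

theorem one_add_mul_one_sub_of_mul_self_eq_zero (ha : a * a = 0) : (1 + a) * (1 - a) = 1 := by
  simp [mul_sub, add_mul, ha]

theorem one_sub_mul_one_add_of_mul_self_eq_zero (ha : a * a = 0) : (1 - a) * (1 + a) = 1 := by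
  simp [mul_add, sub_mul, ha]

theorem one_add_mul_inverse_of_mul_self_eq_zero {q q' : R} (ha : a * a = 0)
    (hq : q' * q = 1 ∧ q * q' = 1) :
    q' * (1 - a) * ((1 + a) * q) = 1 ∧ (1 + a) * q * (q' * (1 - a)) = 1 := by
  constructor
  · rw [mul_assoc, ← mul_assoc (1 - a), one_sub_mul_one_add_of_mul_self_eq_zero ha, one_mul,
      hq.1]
  · rw [mul_assoc, ← mul_assoc q, hq.2, one_mul, one_add_mul_one_sub_of_mul_self_eq_zero ha]

end Ring

theorem hasDerivAt_one_add_mul {𝕜 R : Type*} [NontriviallyNormedField 𝕜] [NormedRing R]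
    [NormedAlgebra 𝕜 R] {a q : 𝕜 → R} {a' b : R} {c : 𝕜} {t : 𝕜} (ha : HasDerivAt a a' t)
    (hq : HasDerivAt q (c • ((1 - a t) * (b * ((1 + a t) * q t)))) t)
    (haa : a t * a t = 0) (ha'a : a' * a t = 0) :
    HasDerivAt (fun s => (1 + a s) * q s) ((a' + c • b) * ((1 + a t) * q t)) t := by
  refine ((ha.const_add 1).mul hq).congr_deriv ?_
  have ha'q : a' * ((1 + a t) * q t) = a' * q t := by
    rw [← mul_assoc, mul_add, mul_one, ha'a, add_zero]
  rw [mul_smul_comm, ← mul_assoc (1 + a t), one_add_mul_one_sub_of_mul_self_eq_zero haa,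
    one_mul, add_mul a', ha'q, smul_mul_assoc]

theorem HasDerivAt.mem_of_forall_mem {𝕜 F : Type*} [NontriviallyNormedField 𝕜]
    [NormedAddCommGroup F] [NormedSpace 𝕜 F] {f : 𝕜 → F} {f' : F} {t : 𝕜}
    (hf : HasDerivAt f f' t) {S : Submodule 𝕜 F} (hS : IsClosed (S : Set F))
    (hfS : ∀ s, f s ∈ S) : f' ∈ S :=
  hS.mem_of_tendsto (hasDerivAt_iff_tendsto_slope.mp hf) <| Filter.Eventually.of_forall
    fun s => S.smul_mem _ (S.sub_mem (hfS s) (hfS t))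

theorem HasDerivAt.clm_apply_mem {𝕜 E F : Type*} [NontriviallyNormedField 𝕜]
    [NormedAddCommGroup E] [NormedSpace 𝕜 E] [NormedAddCommGroup F] [NormedSpace 𝕜 F]
    {A : 𝕜 → E →L[𝕜] F} {A' : E →L[𝕜] F} {t : 𝕜} (hA : HasDerivAt A A' t)
    {S : Submodule 𝕜 F} (hS : IsClosed (S : Set F)) {x : E} (hx : ∀ s, A s x ∈ S) :
    A' x ∈ S :=
  ((hA.clm_apply (hasDerivAt_const t x)).congr_deriv (by simp)).mem_of_forall_mem hS hx

theorem ContinuousLinearMap.intervalIntegral_apply_eq_zero {E F : Type*}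
    [NormedAddCommGroup E] [NormedSpace ℝ E] [CompleteSpace E]
    [NormedAddCommGroup F] [NormedSpace ℝ F] [CompleteSpace F]
    (L : E →L[ℝ] F) {g : ℝ → E} {a b : ℝ}
    (hg : IntervalIntegrable g MeasureTheory.volume a b) (hL : ∀ s, L (g s) = 0) :
    L (∫ s in a..b, g s) = 0 := by
  rw [← L.intervalIntegral_comp_comm hg]
  simp [hL]

theorem LinearMap.apply_mem_of_codisjoint {R M : Type*} [Semiring R] [AddCommMonoid M]
    [Module R M] {H V : Submodule R M} (hHV : Codisjoint H V) (f : M →ₗ[R] M)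
    (hH : ∀ x ∈ H, f x ∈ V) (hV : ∀ v ∈ V, f v = 0) (x : M) : f x ∈ V := by
  obtain ⟨y, hy, v, hv, rfl⟩ :=
    Submodule.mem_sup.mp (hHV.eq_top ▸ Submodule.mem_top : x ∈ H ⊔ V)
  rw [map_add, hV v hv, add_zero]
  exact hH y hy

section VariationOfConstants

variable {E : Type*} [NormedAddCommGroup E] [NormedSpace ℝ E] [CompleteSpace E]
  {P Pinv B : ℝ → E →L[ℝ] E} {u : ℝ → E}

theorem hasDerivAt_variation_of_constants (hP : ∀ t, HasDerivAt P (B t * P t) t)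
    (hinv : ∀ s, Pinv s * P s = 1 ∧ P s * Pinv s = 1) (hu : Continuous u) (t : ℝ) :
    HasDerivAt (fun t => P t (∫ s in (0 : ℝ)..t, Pinv s (u s)))
      (B t (P t (∫ s in (0 : ℝ)..t, Pinv s (u s))) + u t) t := by
  have hm := ((continuous_of_forall_inverse hP hinv).clm_apply hu).integral_hasStrictDerivAt 0 t
  refine ((hP t).clm_apply hm.hasDerivAt).congr_deriv ?_
  have hPP : P t (Pinv t (u t)) = u t := congr($((hinv t).2) (u t))
  simp [hPP]

theorem eq_variation_of_constants {r : ℝ → E} (hP : ∀ t, HasDerivAt P (B t * P t) t)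
    (hinv : ∀ s, Pinv s * P s = 1 ∧ P s * Pinv s = 1)
    (hr : ∀ t, HasDerivAt r (B t (r t) + u t) t) (hr0 : r 0 = 0) (hu : Continuous u)
    (t : ℝ) : r t = P t (∫ s in (0 : ℝ)..t, Pinv s (u s)) := by
  have hPinv : ∀ s, HasDerivAt Pinv (-(Pinv s * (B s * P s) * Pinv s)) s :=
    fun s => (hP s).of_forall_inverse hinv
  have hPP : ∀ s x, P s (Pinv s x) = x := fun s x => congr($((hinv s).2) x)
  have hderiv : ∀ s, HasDerivAt (fun s => Pinv s (r s)) (Pinv s (u s)) s := fun s => by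
    refine ((hPinv s).clm_apply (hr s)).congr_deriv ?_
    simp [hPP]
  have hint := intervalIntegral.integral_eq_sub_of_hasDerivAt (fun s _ => hderiv s)
    (((continuous_of_forall_inverse hP hinv).clm_apply hu).intervalIntegrable 0 t)
  rw [hint, hr0, map_zero, sub_zero, hPP]

theorem hasDerivAt_add_integral_apply {h : ℝ → E} {C A' : ℝ → E →L[ℝ] E} {V : Submodule ℝ E}
    (hh : ∀ t, HasDerivAt h (C t (h t) + u t) t) (hA' : Continuous A')
    (hA'_mem : ∀ s x, A' s x ∈ V) (hA'V : ∀ t, ∀ v ∈ V, A' t v = 0)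
    (hCV : ∀ t, ∀ v ∈ V, C t v = 0) (t : ℝ) :
    HasDerivAt (fun t => h t + ∫ s in (0 : ℝ)..t, A' s (h s))
      ((A' t + C t) (h t + ∫ s in (0 : ℝ)..t, A' s (h s)) + u t) t := by
  have hA'h := hA'.clm_apply (continuous_iff_continuousAt.mpr fun t => (hh t).continuousAt)
  refine ((hh t).add ((hA'h.integral_hasStrictDerivAt 0 t).hasDerivAt)).congr_deriv ?_
  have hA'I := (A' t).intervalIntegral_apply_eq_zero (hA'h.intervalIntegrable 0 t)
    fun s => hA'V t _ (hA'_mem s _)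
  have hCI := (C t).intervalIntegral_apply_eq_zero (hA'h.intervalIntegrable 0 t)
    fun s => hCV t _ (hA'_mem s _)
  simp only [add_apply, map_add, hA'I, hCI]
  abel

end VariationOfConstants

theorem stmt11_general {E : Type*} [NormedAddCommGroup E] [NormedSpace ℝ E]
    [FiniteDimensional ℝ E]
    (Hs Vs : Submodule ℝ E) (hcompl : IsCompl Hs Vs)
    (Ric : ℝ → E →L[ℝ] E)
    (hRicV : ∀ t, ∀ v ∈ Vs, Ric t v = 0)
    (A A' : ℝ → E →L[ℝ] E)
    (hA : ∀ t, HasDerivAt A (A' t) t) (hA'_cont : Continuous A')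
    (hAH : ∀ t, ∀ h ∈ Hs, A t h ∈ Vs)
    (hAV : ∀ t, ∀ v ∈ Vs, A t v = 0)
    (Q Qh : ℝ → E →L[ℝ] E)
    (hQ : ∀ t, HasDerivAt Q (-(1 / 2 : ℝ) • (Ric t).comp (Q t)) t)
    (hQh : ∀ t, HasDerivAt Qh (-(1 / 2 : ℝ) •
      ((ContinuousLinearMap.id ℝ E - A t).comp
        ((Ric t).comp ((ContinuousLinearMap.id ℝ E + A t).comp (Qh t))))) t)
    (Qinv Qhinv : ℝ → E →L[ℝ] E)
    (hQinv : ∀ t, (Qinv t).comp (Q t) = ContinuousLinearMap.id ℝ E ∧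
      (Q t).comp (Qinv t) = ContinuousLinearMap.id ℝ E)
    (hQhinv : ∀ t, (Qhinv t).comp (Qh t) = ContinuousLinearMap.id ℝ E ∧
      (Qh t).comp (Qhinv t) = ContinuousLinearMap.id ℝ E)
    (k' : ℝ → E)
    (hk'_cont : Continuous k')
    (h : ℝ → E)
    (hh : ∀ t, h t = Q t (∫ s in (0:ℝ)..t, Qinv s (k' s))) :
    ∀ t, ((ContinuousLinearMap.id ℝ E + A t).comp (Qh t))
        (∫ s in (0:ℝ)..t, Qhinv s ((ContinuousLinearMap.id ℝ E - A s) (k' s)))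
      = h t + ∫ s in (0:ℝ)..t, A' s (h s) := by
  have hVs : IsClosed (Vs : Set E) := Vs.closed_of_finiteDimensional
  have hA_mem : ∀ t x, A t x ∈ Vs := fun t =>
    LinearMap.apply_mem_of_codisjoint hcompl.codisjoint (A t : E →ₗ[ℝ] E) (hAH t) (hAV t)
  have hA'_mem : ∀ t x, A' t x ∈ Vs := fun t x => (hA t).clm_apply_mem hVs (hA_mem · x)
  have hA'V : ∀ t, ∀ v ∈ Vs, A' t v = 0 := fun t v hv => (Submodule.mem_bot ℝ).mp <|
    (hA t).clm_apply_mem isClosed_singleton fun s => (Submodule.mem_bot ℝ).mpr (hAV s v hv)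
  have hkill : ∀ L M : E →L[ℝ] E, (∀ v ∈ Vs, L v = 0) → (∀ x, M x ∈ Vs) → L * M = 0 :=
    fun L M hL hM => ext fun x => hL _ (hM x)
  have hP : ∀ t, HasDerivAt (fun t => (1 + A t) * Qh t)
      ((A' t + (-(1 / 2 : ℝ)) • Ric t) * ((1 + A t) * Qh t)) t :=
    fun t => hasDerivAt_one_add_mul (hA t) (hQh t)
      (hkill _ _ (hAV t) (hA_mem t)) (hkill _ _ (hA'V t) (hA_mem t))
  have hh' : ∀ t, HasDerivAt h ((-(1 / 2 : ℝ) • Ric t) (h t) + k' t) t := by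
    rw [funext hh]
    exact hasDerivAt_variation_of_constants
      (fun t => (hQ t).congr_deriv (smul_mul_assoc _ _ _).symm) hQinv hk'_cont
  have hr := hasDerivAt_add_integral_apply hh' hA'_cont hA'_mem hA'V
    fun t v hv => by simp [hRicV t v hv]
  exact fun t => (eq_variation_of_constants hP
    (fun s => one_add_mul_inverse_of_mul_self_eq_zero (hkill _ _ (hAV s) (hA_mem s)) (hQhinv s))
    hr (by simp [hh]) hk'_cont t).symm

/-- **Conversion between the damped gradient and the gradient (Lemma 3.7).**
Same pathwise setup as for the identity `(id+A_t)Q̂_t = Q_t + ∫₀ᵗ dA_r Q_r`: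
in `T_xM = H ⊕ V`, `Ric_t` vanishes on `V` with image in `H`; `A_t(H) ⊆ V`,
`A_t(V) = 0`, `A_0 = 0`; `Q, Q̂` the fundamental solutions of
`dQ = −½ Ric_t Q dt` and `dQ̂ = −½(id−A)Ric(id+A)Q̂ dt`.  For any absolutely
continuous `k : [0,T] → H` with `k_0 = 0`, setting `h_t = Q_t ∫₀ᵗ Q_s^{-1} dk_s`,
one has `(id + A_t) Q̂_t ∫₀ᵗ Q̂_s^{-1}(id − A_s) dk_s = h_t + ∫₀ᵗ dA_s h_s`. -/
theorem stmt11 {E : Type*} [NormedAddCommGroup E] [NormedSpace ℝ E]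
    [FiniteDimensional ℝ E]
    (Hs Vs : Submodule ℝ E) (hcompl : IsCompl Hs Vs)
    (Ric : ℝ → E →L[ℝ] E) (hRic_cont : Continuous Ric)
    (hRicV : ∀ t, ∀ v ∈ Vs, Ric t v = 0)
    (hRicH : ∀ t x, Ric t x ∈ Hs)
    (A A' : ℝ → E →L[ℝ] E)
    (hA : ∀ t, HasDerivAt A (A' t) t) (hA'_cont : Continuous A')
    (hA0 : A 0 = 0)
    (hAH : ∀ t, ∀ h ∈ Hs, A t h ∈ Vs)
    (hAV : ∀ t, ∀ v ∈ Vs, A t v = 0)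
    (Q Qh : ℝ → E →L[ℝ] E)
    (hQ0 : Q 0 = ContinuousLinearMap.id ℝ E)
    (hQ : ∀ t, HasDerivAt Q (-(1 / 2 : ℝ) • (Ric t).comp (Q t)) t)
    (hQh0 : Qh 0 = ContinuousLinearMap.id ℝ E)
    (hQh : ∀ t, HasDerivAt Qh (-(1 / 2 : ℝ) •
      ((ContinuousLinearMap.id ℝ E - A t).comp
        ((Ric t).comp ((ContinuousLinearMap.id ℝ E + A t).comp (Qh t))))) t)
    (Qinv Qhinv : ℝ → E →L[ℝ] E)
    (hQinv : ∀ t, (Qinv t).comp (Q t) = ContinuousLinearMap.id ℝ E ∧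
      (Q t).comp (Qinv t) = ContinuousLinearMap.id ℝ E)
    (hQhinv : ∀ t, (Qhinv t).comp (Qh t) = ContinuousLinearMap.id ℝ E ∧
      (Qh t).comp (Qhinv t) = ContinuousLinearMap.id ℝ E)
    (k k' : ℝ → E)
    (hk : ∀ t, HasDerivAt k (k' t) t) (hk'_cont : Continuous k')
    (hk0 : k 0 = 0)
    (hkH : ∀ t, k t ∈ Hs) (hk'H : ∀ t, k' t ∈ Hs)
    (h : ℝ → E)
    (hh : ∀ t, h t = Q t (∫ s in (0:ℝ)..t, Qinv s (k' s))) :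
    ∀ t, ((ContinuousLinearMap.id ℝ E + A t).comp (Qh t))
        (∫ s in (0:ℝ)..t, Qhinv s ((ContinuousLinearMap.id ℝ E - A s) (k' s)))
      = h t + ∫ s in (0:ℝ)..t, A' s (h s) :=
  stmt11_general Hs Vs hcompl Ric hRicV A A' hA hA'_cont hAH hAV Q Qh hQ hQh Qinv Qhinv hQinv hQhinv
    k' hk'_cont h hh
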